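/- Let A be the commutative local algebra generated over a field k by x₁,…,x_c, y₁,…,y_d subject to the relations x_i x_{i'} = 0 and y_j y_{j'} = 0 for all indices. Then A has Hilbert type (c+d, cd): the radical J satisfies J³ = 0, length(J/J²) = c + d, and J² has k-basis {x_i y_j : 1 ≤ i ≤ c, 1 ≤ j ≤ d}; moreover the ideal U = Σ_j A y_j satisfies U² = 0 and J² ⊆ JU, i.e., U is a left Conca ideal. -/

import Mathlib

/-- The composition length of a module, as the Krull dimension of its submodule lattice. -/
noncomputable def moduleLength (A M : Type*) [Ring A] [AddCommGroup M] [Module A M] : ℕ∞ :=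
  WithBot.unbotD 0 (Order.krullDim (Submodule A M))

open MvPolynomial in
/-- The relations `x_i x_{i'} = 0`, `y_j y_{j'} = 0` defining `Λ(c;a(1),…)`-type algebras. -/
def rels (k : Type*) [Field k] (c d : ℕ) : Set (MvPolynomial (Fin c ⊕ Fin d) k) :=
  {p | (∃ i i' : Fin c, p = X (Sum.inl i) * X (Sum.inl i')) ∨
       (∃ j j' : Fin d, p = X (Sum.inr j) * X (Sum.inr j'))}

/-- The commutative algebra `Λ(c,d) = k[x₁,…,x_c,y₁,…,y_d]/(x_i x_{i'}, y_j y_{j'})`. -/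
def Lam (k : Type*) [Field k] (c d : ℕ) : Type _ :=
  MvPolynomial (Fin c ⊕ Fin d) k ⧸ Ideal.span (rels k c d)

noncomputable instance (k : Type*) [Field k] (c d : ℕ) : CommRing (Lam k c d) :=
  Ideal.Quotient.commRing _

noncomputable instance (k : Type*) [Field k] (c d : ℕ) : Algebra k (Lam k c d) :=
  Ideal.Quotient.algebra k

open MvPolynomial in
/-- The generator `x_i` of `Λ(c,d)`. -/
noncomputable def xgen (k : Type*) [Field k] (c d : ℕ) (i : Fin c) : Lam k c d :=
  Ideal.Quotient.mk _ (X (Sum.inl i))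

open MvPolynomial in
/-- The generator `y_j` of `Λ(c,d)`. -/
noncomputable def ygen (k : Type*) [Field k] (c d : ℕ) (j : Fin d) : Lam k c d :=
  Ideal.Quotient.mk _ (X (Sum.inr j))

/-!
The augmentation `ε : A → k` (evaluation at `0`) has kernel `m` spanned by the variables. The
relations kill every product of two `x`'s or two `y`'s, so `m²` is spanned by the `x_i y_j` and
`m³ = 0`; thus `m` is a nilpotent maximal ideal, i.e. the radical `J`. Since `A = k ⊕ m`, the
`k`-span of a set `S` of generators of an ideal `I` of `A` misses only `m I`; this turns `m` and
`m²` into the `k`-spans of `{x_i, y_j, x_i y_j}` and `{x_i y_j}`. These families are linearly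
independent because the monomials `x_i`, `y_j`, `x_i y_j` are not divisible by any of the
relation monomials `x_i x_i'`, `y_j y_j'`, which span the defining ideal. Hence
`dim_k m/m² = (c + d + cd) - cd`, and since `A` acts on `m/m²` through `ε`, this is its length.
-/

lemma moduleLength_eq_length (R M : Type*) [Ring R] [AddCommGroup M] [Module R M] :
    moduleLength R M = Module.length R M := by
  rw [moduleLength, ← Module.coe_length, WithBot.unbotD_coe]

def Submodule.orderIsoOfSMulEq {R S M : Type*} [CommRing R] [Ring S] [AddCommGroup M]
    [Algebra R S] [Module R M] [Module S M] [IsScalarTower R S M] (φ : S → R)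
    (h : ∀ (s : S) (m : M), s • m = φ s • m) : Submodule S M ≃o Submodule R M where
  toFun N := N.restrictScalars R
  invFun N := ⟨N.toAddSubmonoid, fun s m hm => by rw [h]; exact N.smul_mem _ hm⟩
  left_inv _ := rfl
  right_inv _ := rfl
  map_rel_iff' := .rfl

lemma moduleLength_eq_finrank_of_smul_eq {K S M : Type*} [Field K] [Ring S] [AddCommGroup M]
    [Algebra K S] [Module K M] [Module S M] [IsScalarTower K S M] [Module.Finite K M]
    (φ : S → K) (h : ∀ (s : S) (m : M), s • m = φ s • m) :
    moduleLength S M = Module.finrank K M := by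
  rw [moduleLength, Order.krullDim_eq_of_orderIso (Submodule.orderIsoOfSMulEq φ h),
    ← moduleLength, moduleLength_eq_length, Module.length_eq_finrank]

section Augmentation

variable {k A : Type*} [CommRing k] [CommRing A] [Algebra k A] (ε : A →ₐ[k] k)

lemma sub_algebraMap_mem_ker (a : A) : a - algebraMap k A (ε a) ∈ RingHom.ker ε := by
  simp

lemma restrictScalars_span_eq_span_sup (S : Set A) :
    (Ideal.span S).restrictScalars k =
      Submodule.span k S ⊔ (RingHom.ker ε * Ideal.span S).restrictScalars k := by
  refine le_antisymm (fun x hx => ?_) (sup_le (Submodule.span_le_restrictScalars k A S)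
    (Submodule.restrictScalars_mono k Ideal.mul_le_right))
  induction hx using Submodule.span_induction with
  | mem x hx => exact Submodule.mem_sup_left (Submodule.subset_span hx)
  | zero => exact zero_mem _
  | add x y _ _ hx hy => exact add_mem hx hy
  | smul a x hxS hx =>
    have hdecomp : a • x = ε a • x + (a - algebraMap k A (ε a)) * x := by
      rw [smul_eq_mul, Algebra.smul_def]; ring
    rw [hdecomp]
    exact add_mem (Submodule.smul_mem _ _ hx)
      (Submodule.mem_sup_right (Ideal.mul_mem_mul (sub_algebraMap_mem_ker ε a) hxS))

lemma smul_cotangent_eq (a : A)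
    (v : ↥(RingHom.ker ε) ⧸
      Submodule.comap (RingHom.ker ε).subtype (RingHom.ker ε ^ 2 : Ideal A)) :
    a • v = ε a • v := by
  obtain ⟨u, rfl⟩ := Submodule.Quotient.mk_surjective _ v
  rw [← Submodule.Quotient.mk_smul, ← Submodule.Quotient.mk_smul, Submodule.Quotient.eq]
  show a * (u : A) - ε a • (u : A) ∈ RingHom.ker ε ^ 2
  rw [Algebra.smul_def, ← sub_mul, sq]
  exact Ideal.mul_mem_mul (sub_algebraMap_mem_ker ε a) u.2

end Augmentation

lemma finrank_cotangent_add_finrank_sq {k A : Type*} [Field k] [CommRing A] [Algebra k A]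
    (ε : A →ₐ[k] k) [Module.Finite k (RingHom.ker ε)] :
    Module.finrank k (↥(RingHom.ker ε) ⧸
        Submodule.comap (RingHom.ker ε).subtype (RingHom.ker ε ^ 2 : Ideal A)) +
      Module.finrank k ↥(RingHom.ker ε ^ 2) = Module.finrank k (RingHom.ker ε) := by
  set N := Submodule.comap (RingHom.ker ε).subtype (RingHom.ker ε ^ 2 : Ideal A)
  rw [← (Submodule.Quotient.restrictScalarsEquiv k N).finrank_eq,
    ← ((Submodule.comapSubtypeEquivOfLe (Ideal.pow_le_self two_ne_zero)).restrictScalars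
      k).finrank_eq]
  exact (N.restrictScalars k).finrank_quotient_add_finrank

namespace MvPolynomial

variable {k σ : Type*} [CommRing k]

lemma X_mul_X_eq_monomial (s t : σ) :
    (X s * X t : MvPolynomial σ k) = monomial (Finsupp.single s 1 + Finsupp.single t 1) 1 := by
  rw [X, X, monomial_mul, one_mul]

lemma linearIndependent_mk_monomial {ι : Type*} {s : Set (σ →₀ ℕ)}
    {e : ι → σ →₀ ℕ} (he : Function.Injective e) (hs : ∀ i, ∀ n ∈ s, ¬ n ≤ e i) :
    LinearIndependent k (fun i =>
      Ideal.Quotient.mk (Ideal.span ((monomial · (1 : k)) '' s)) (monomial (e i) (1 : k))) := by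
  have hmon := (basisMonomials σ k).linearIndependent.comp e he
  rw [coe_basisMonomials] at hmon
  refine hmon.map (f := (Ideal.Quotient.mkₐ k _).toLinearMap) (Submodule.disjoint_def.mpr ?_)
  intro p hp hker
  have hsupp : ↑p.support ⊆ Set.range e := by
    rw [← mem_restrictSupport_iff, restrictSupport_eq_span, ← Set.range_comp]
    exact hp
  have hI : p ∈ Ideal.span ((monomial · (1 : k)) '' s) := by
    simpa [Ideal.Quotient.eq_zero_iff_mem] using hker
  rw [mem_ideal_span_monomial_image] at hI
  refine support_eq_empty.mp (Finset.eq_empty_of_forall_notMem fun m hm => ?_)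
  obtain ⟨i, rfl⟩ := hsupp hm
  obtain ⟨n, hn, hle⟩ := hI _ hm
  exact hs i n hn hle

end MvPolynomial

namespace Lam

open MvPolynomial Finsupp

variable {k : Type*} [Field k] {c d : ℕ}

variable (k c d) in
noncomputable def mk : MvPolynomial (Fin c ⊕ Fin d) k →ₐ[k] Lam k c d :=
  Ideal.Quotient.mkₐ k _

lemma mk_surjective : Function.Surjective (mk k c d) :=
  Ideal.Quotient.mkₐ_surjective k _

lemma mk_eq_zero_iff {p : MvPolynomial (Fin c ⊕ Fin d) k} :
    mk k c d p = 0 ↔ p ∈ Ideal.span (rels k c d) :=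
  Ideal.Quotient.eq_zero_iff_mem

variable (k c d) in
noncomputable def gen (s : Fin c ⊕ Fin d) : Lam k c d := mk k c d (X s)

variable (k c d) in
noncomputable def mixedProd (p : Fin c × Fin d) : Lam k c d :=
  gen k c d (.inl p.1) * gen k c d (.inr p.2)

lemma gen_inl_mul_gen_inl (i i' : Fin c) : gen k c d (.inl i) * gen k c d (.inl i') = 0 := by
  rw [gen, gen, ← map_mul, mk_eq_zero_iff]
  exact Ideal.subset_span (.inl ⟨i, i', rfl⟩)

lemma gen_inr_mul_gen_inr (j j' : Fin d) : gen k c d (.inr j) * gen k c d (.inr j') = 0 := by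
  rw [gen, gen, ← map_mul, mk_eq_zero_iff]
  exact Ideal.subset_span (.inr ⟨j, j', rfl⟩)

variable (c d) in
def relationExponents : Set (Fin c ⊕ Fin d →₀ ℕ) :=
  {n | ∃ s t : Fin c ⊕ Fin d, s.isLeft = t.isLeft ∧ n = single s 1 + single t 1}

lemma rels_eq_image_relationExponents : rels k c d = (monomial · 1) '' relationExponents c d := by
  ext p
  simp only [rels, relationExponents, Set.mem_ofPred_eq, Set.mem_image]
  constructor
  · rintro (⟨i, i', rfl⟩ | ⟨j, j', rfl⟩)
    · exact ⟨_, ⟨.inl i, .inl i', rfl, rfl⟩, (X_mul_X_eq_monomial _ _).symm⟩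
    · exact ⟨_, ⟨.inr j, .inr j', rfl, rfl⟩, (X_mul_X_eq_monomial _ _).symm⟩
  · rintro ⟨_, ⟨s, t, hst, rfl⟩, rfl⟩
    rw [← X_mul_X_eq_monomial]
    rcases s with i | j <;> rcases t with i' | j' <;> cases hst
    · exact .inl ⟨i, i', rfl⟩
    · exact .inr ⟨j, j', rfl⟩

variable (c d) in
noncomputable def standardExponent :
    (Fin c ⊕ Fin d) ⊕ (Fin c × Fin d) → (Fin c ⊕ Fin d →₀ ℕ) :=
  Sum.elim (fun s => single s 1) (fun p => single (.inl p.1) 1 + single (.inr p.2) 1)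

variable (k c d) in
noncomputable def standardMonomial : (Fin c ⊕ Fin d) ⊕ (Fin c × Fin d) → Lam k c d :=
  Sum.elim (gen k c d) (mixedProd k c d)

lemma standardExponent_injective : Function.Injective (standardExponent c d) := by
  rintro (s | ⟨i, j⟩) (t | ⟨i', j'⟩) h <;>
    simp only [standardExponent, Sum.elim_inl, Sum.elim_inr] at h
  · rw [single_left_injective one_ne_zero h]
  · simpa using congrArg degree h
  · simpa using congrArg degree h
  · obtain ⟨rfl, rfl⟩ : i = i' ∧ j = j' := by
      simpa [single_add_single_eq_single_add_single] using h
    rfl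

lemma not_relationExponent_le_standardExponent (u : (Fin c ⊕ Fin d) ⊕ (Fin c × Fin d)) :
    ∀ n ∈ relationExponents c d, ¬ n ≤ standardExponent c d u := by
  rintro _ ⟨s, t, hst, rfl⟩ hle
  -- a relation exponent has two `x`'s or two `y`'s, a standard exponent at most one of each
  have hweight (w : Fin c ⊕ Fin d → ℕ) :
      weight w (single s 1 + single t 1) ≤ weight w (standardExponent c d u) := by
    obtain ⟨m, hm⟩ := exists_add_of_le hle
    rw [hm, map_add (weight w) _ m]
    exact le_self_add
  rcases s with i | j <;> rcases t with i' | j' <;> cases hst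
  · have := hweight (Sum.elim 1 0)
    rcases u with (_ | _) | _ <;> simp [standardExponent, weight_single] at this
  · have := hweight (Sum.elim 0 1)
    rcases u with (_ | _) | _ <;> simp [standardExponent, weight_single] at this

lemma mk_monomial_standardExponent (u : (Fin c ⊕ Fin d) ⊕ (Fin c × Fin d)) :
    mk k c d (monomial (standardExponent c d u) 1) = standardMonomial k c d u := by
  rcases u with s | ⟨i, j⟩
  · rfl
  · simp only [standardExponent, standardMonomial, mixedProd, gen, Sum.elim_inr,
      ← X_mul_X_eq_monomial, map_mul]

lemma linearIndependent_standardMonomial : LinearIndependent k (standardMonomial k c d) := by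
  have h := linearIndependent_mk_monomial (k := k) (standardExponent_injective (c := c) (d := d))
    not_relationExponent_le_standardExponent
  rw [← rels_eq_image_relationExponents] at h
  have hfun : standardMonomial k c d = fun u => mk k c d (monomial (standardExponent c d u) 1) :=
    funext fun u => (mk_monomial_standardExponent u).symm
  rw [hfun]
  exact h

lemma linearIndependent_mixedProd : LinearIndependent k (mixedProd k c d) :=
  linearIndependent_standardMonomial.comp Sum.inr Sum.inr_injective

variable (k c d) in
noncomputable def augmentation : Lam k c d →ₐ[k] k :=
  Ideal.Quotient.liftₐ _ (aeval 0) fun p hp => by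
    refine RingHom.mem_ker.mp ((Ideal.span_le (I := RingHom.ker (aeval 0))).mpr ?_ hp)
    rintro _ (⟨i, i', rfl⟩ | ⟨j, j', rfl⟩) <;> simp

lemma augmentation_mk (p : MvPolynomial (Fin c ⊕ Fin d) k) :
    augmentation k c d (mk k c d p) = constantCoeff p := by
  show aeval 0 p = _
  simp

lemma augmentation_surjective : Function.Surjective (augmentation k c d) :=
  fun r => ⟨algebraMap k _ r, AlgHom.commutes _ r⟩

lemma ker_augmentation :
    RingHom.ker (augmentation k c d) = Ideal.span (Set.range (gen k c d)) := by
  refine le_antisymm (fun a ha => ?_) (Ideal.span_le.mpr ?_)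
  · obtain ⟨p, rfl⟩ := mk_surjective a
    have hp : constantCoeff p = 0 := by rwa [RingHom.mem_ker, augmentation_mk] at ha
    have hpX : p ∈ Ideal.span (Set.range X) := by
      rw [← Set.image_univ, mem_ideal_span_X_image]
      intro m hm
      by_contra! hzero
      rw [show m = 0 from Finsupp.ext fun s => hzero s trivial, MvPolynomial.mem_support_iff] at hm
      exact hm hp
    have hmap := Ideal.mem_map_of_mem (mk k c d) hpX
    rwa [Ideal.map_span, ← Set.range_comp] at hmap
  · rintro _ ⟨s, rfl⟩
    rw [SetLike.mem_coe, RingHom.mem_ker, gen, augmentation_mk, constantCoeff_X]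

lemma ker_augmentation_sq :
    RingHom.ker (augmentation k c d) ^ 2 = Ideal.span (Set.range (mixedProd k c d)) := by
  rw [ker_augmentation, sq, Ideal.span_mul_span']
  refine le_antisymm (Ideal.span_le.mpr ?_) (Ideal.span_le.mpr ?_)
  · rintro _ ⟨_, ⟨s, rfl⟩, _, ⟨t, rfl⟩, rfl⟩
    dsimp only
    rcases s with i | j <;> rcases t with i' | j'
    · rw [gen_inl_mul_gen_inl]
      exact zero_mem _
    · exact Ideal.subset_span ⟨(i, j'), rfl⟩
    · rw [mul_comm]
      exact Ideal.subset_span ⟨(i', j), rfl⟩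
    · rw [gen_inr_mul_gen_inr]
      exact zero_mem _
  · rintro _ ⟨⟨i, j⟩, rfl⟩
    exact Ideal.subset_span ⟨_, ⟨.inl i, rfl⟩, _, ⟨.inr j, rfl⟩, rfl⟩

lemma ker_augmentation_pow_three : RingHom.ker (augmentation k c d) ^ 3 = ⊥ := by
  rw [pow_succ', ker_augmentation_sq, ker_augmentation, Ideal.span_mul_span', eq_bot_iff,
    Ideal.span_le]
  rintro _ ⟨_, ⟨s, rfl⟩, _, ⟨⟨i, j⟩, rfl⟩, rfl⟩
  simp only [SetLike.mem_coe, Ideal.mem_bot, mixedProd]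
  rcases s with i' | j'
  · rw [← mul_assoc, gen_inl_mul_gen_inl, zero_mul]
  · rw [mul_left_comm, gen_inr_mul_gen_inr, mul_zero]

lemma jacobson_bot_eq_ker_augmentation :
    Ideal.jacobson (⊥ : Ideal (Lam k c d)) = RingHom.ker (augmentation k c d) := by
  refine le_antisymm
    (sInf_le ⟨bot_le, RingHom.ker_isMaximal_of_surjective _ augmentation_surjective⟩)
    fun a ha => ?_
  have ha3 : a ^ 3 = 0 := by
    simpa [ker_augmentation_pow_three] using Ideal.pow_mem_pow ha 3
  rw [Ideal.jacobson_bot]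
  exact nilradical_le_jacobson _ (mem_nilradical.mpr ⟨3, ha3⟩)

lemma restrictScalars_ker_augmentation_sq :
    (RingHom.ker (augmentation k c d) ^ 2).restrictScalars k =
      Submodule.span k (Set.range (mixedProd k c d)) := by
  rw [ker_augmentation_sq, restrictScalars_span_eq_span_sup (augmentation k c d),
    ← ker_augmentation_sq, ← pow_succ', ker_augmentation_pow_three]
  simp

lemma restrictScalars_ker_augmentation :
    (RingHom.ker (augmentation k c d)).restrictScalars k =
      Submodule.span k (Set.range (standardMonomial k c d)) := by
  rw [ker_augmentation, restrictScalars_span_eq_span_sup (augmentation k c d),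
    ← ker_augmentation, ← sq, restrictScalars_ker_augmentation_sq, ← Submodule.span_union,
    standardMonomial, Set.Sum.elim_range]

lemma finrank_ker_augmentation :
    Module.finrank k (RingHom.ker (augmentation k c d)) = c + d + c * d := by
  have h := finrank_span_eq_card (linearIndependent_standardMonomial (k := k) (c := c) (d := d))
  rw [← restrictScalars_ker_augmentation, Fintype.card_sum, Fintype.card_sum,
    Fintype.card_prod, Fintype.card_fin, Fintype.card_fin] at h
  exact h

variable (k c d) in
noncomputable def basisKerAugmentationSq : Module.Basis (Fin c × Fin d) k
    ↥(Submodule.restrictScalars k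
      ((RingHom.ker (augmentation k c d) ^ 2 : Ideal (Lam k c d)) :
        Submodule (Lam k c d) (Lam k c d))) :=
  (Module.Basis.span linearIndependent_mixedProd).map
    (LinearEquiv.ofEq _ _ (restrictScalars_ker_augmentation_sq (k := k) (c := c) (d := d)).symm)

lemma basisKerAugmentationSq_apply (p : Fin c × Fin d) :
    (basisKerAugmentationSq k c d p : Lam k c d) = mixedProd k c d p := by
  simp [basisKerAugmentationSq, Module.Basis.span_apply]

lemma finrank_ker_augmentation_sq :
    Module.finrank k ↥(RingHom.ker (augmentation k c d) ^ 2) = c * d := by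
  have h := Module.finrank_eq_card_basis (basisKerAugmentationSq k c d)
  rw [Fintype.card_prod, Fintype.card_fin, Fintype.card_fin] at h
  exact h

instance : Module.Finite k (RingHom.ker (augmentation k c d)) :=
  have : Module.Finite k ((RingHom.ker (augmentation k c d)).restrictScalars k) := by
    rw [restrictScalars_ker_augmentation]
    exact Module.Finite.span_of_finite k (Set.finite_range _)
  this

lemma moduleLength_cotangent :
    moduleLength (Lam k c d) (↥(RingHom.ker (augmentation k c d)) ⧸
      Submodule.comap (RingHom.ker (augmentation k c d)).subtype
        (RingHom.ker (augmentation k c d) ^ 2 : Ideal (Lam k c d))) = ((c + d : ℕ) : ℕ∞) := by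
  rw [moduleLength_eq_finrank_of_smul_eq (augmentation k c d) (smul_cotangent_eq _)]
  have h := finrank_cotangent_add_finrank_sq (augmentation k c d)
  rw [finrank_ker_augmentation, finrank_ker_augmentation_sq] at h
  congr 1
  omega

lemma span_range_ygen_mul_self :
    Ideal.span (Set.range (ygen k c d)) * Ideal.span (Set.range (ygen k c d)) = ⊥ := by
  rw [Ideal.span_mul_span', eq_bot_iff, Ideal.span_le]
  rintro _ ⟨_, ⟨j, rfl⟩, _, ⟨j', rfl⟩, rfl⟩
  exact gen_inr_mul_gen_inr j j'

lemma ker_augmentation_sq_le_mul_span_range_ygen :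
    RingHom.ker (augmentation k c d) ^ 2 ≤
      RingHom.ker (augmentation k c d) * Ideal.span (Set.range (ygen k c d)) := by
  rw [ker_augmentation_sq, Ideal.span_le]
  rintro _ ⟨⟨i, j⟩, rfl⟩
  rw [ker_augmentation]
  exact Ideal.mul_mem_mul (Ideal.subset_span ⟨_, rfl⟩) (Ideal.subset_span ⟨j, rfl⟩)

end Lam

/-- 7.3/7.1: the commutative local algebra `A = k[x₁,…,x_c,y₁,…,y_d]/(x_i x_{i'}, y_j y_{j'})`
has Hilbert type `(c+d, cd)`: its radical `J` satisfies `J³ = 0`, `|J/J²| = c + d`, and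
`J²` has `k`-basis `{x_i y_j}`; moreover `U = Σ_j A y_j` satisfies `U² = 0` and `J² ⊆ JU`,
i.e. `U` is a left Conca ideal. -/
theorem stmt_18 (k : Type*) [Field k] (c d : ℕ) :
    (Ideal.jacobson (⊥ : Ideal (Lam k c d))) ^ 3 = ⊥ ∧
    moduleLength (Lam k c d)
      (↥(Ideal.jacobson (⊥ : Ideal (Lam k c d))) ⧸ Submodule.comap
        (Ideal.jacobson (⊥ : Ideal (Lam k c d))).subtype
        ((Ideal.jacobson (⊥ : Ideal (Lam k c d))) ^ 2 : Ideal (Lam k c d)))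
      = ((c + d : ℕ) : ℕ∞) ∧
    (∃ b : Module.Basis (Fin c × Fin d) k
        (Submodule.restrictScalars k
          (((Ideal.jacobson (⊥ : Ideal (Lam k c d))) ^ 2 : Ideal (Lam k c d)) :
            Submodule (Lam k c d) (Lam k c d))),
      ∀ i : Fin c, ∀ j : Fin d, (b (i, j) : Lam k c d) = xgen k c d i * ygen k c d j) ∧
    Ideal.span (Set.range (ygen k c d)) * Ideal.span (Set.range (ygen k c d)) = ⊥ ∧
    (Ideal.jacobson (⊥ : Ideal (Lam k c d))) ^ 2 ≤
      Ideal.jacobson (⊥ : Ideal (Lam k c d)) * Ideal.span (Set.range (ygen k c d)) := by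
  rw [Lam.jacobson_bot_eq_ker_augmentation]
  exact ⟨Lam.ker_augmentation_pow_three, Lam.moduleLength_cotangent,
    ⟨Lam.basisKerAugmentationSq k c d, fun i j => Lam.basisKerAugmentationSq_apply (i, j)⟩,
    Lam.span_range_ygen_mul_self, Lam.ker_augmentation_sq_le_mul_span_range_ygen⟩
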